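/- Verma relations hold in the geometric Littelmann path model in ranks A₁×A₁ and A₂: let α, β be linear forms on V and α^∨, β^∨ ∈ V with α(α^∨) = β(β^∨) = 2. For every π ∈ C₀([0,T],V) and all c₁, c₂ ∈ ℝ: (a) if α(β^∨) = β(α^∨) = 0, then e_α^{c₁}·(e_β^{c₂}·π) = e_β^{c₂}·(e_α^{c₁}·π); (b) if α(β^∨) = β(α^∨) = −1, then e_α^{c₁}·e_β^{c₁+c₂}·e_α^{c₂}·π = e_β^{c₂}·e_α^{c₁+c₂}·e_β^{c₁}·π. -/

import Mathlib

open MeasureTheory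

/-- `ε_α(π) = log ∫₀^T e^{-α(π(s))} ds`. -/
noncomputable def pathEps {V : Type*} [NormedAddCommGroup V] [NormedSpace ℝ V]
    (α : V →ₗ[ℝ] ℝ) (T : ℝ) (π : ℝ → V) : ℝ :=
  Real.log (∫ s in (0:ℝ)..T, Real.exp (-α (π s)))

/-- The geometric Littelmann operator on paths over the horizon `T`. -/
noncomputable def pathAct {V : Type*} [NormedAddCommGroup V] [NormedSpace ℝ V]
    (α : V →ₗ[ℝ] ℝ) (αv : V) (T : ℝ) (c : ℝ) (π : ℝ → V) : ℝ → V :=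
  fun t => π t + Real.log (1 + ((Real.exp c - 1) / Real.exp (pathEps α T π)) *
    ∫ s in (0:ℝ)..t, Real.exp (-α (π s))) • αv

/-
Write `a = exp (-α ∘ π)`, `b = exp (-β ∘ π)`, `A = ∫₀ a`, `B = ∫₀ b`. The operator `e_α^c` adds
`log ψ • α^∨` with `ψ = 1 + (e^c - 1) A / A(T)`, and this multiplies the weight `exp (-γ ∘ π)` of
every linear form `γ` by `ψ ^ (-γ α^∨)`. When `α β^∨ = β α^∨ = 0` neither operator changes the
weight the other one reads, so they commute. In type `A₂` the weights can be followed through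
`e_α^c e_β^(c+c') e_α^c'`: the middle step integrates `b ψ`, the last one `a ψ' / ψ²` with `ψ'`
the factor of the middle step, whose primitive is found by the fundamental theorem of calculus
together with the integration by parts `A B = ∫ a B + ∫ b A`. The composite adds
`log X • α^∨ + log Y • β^∨` with `X = vermaFactor a b c c'` and `Y = vermaFactor b a c' c`, a
formula symmetric under `(α, c) ↔ (β, c')`: this is the braid relation. Since `e_α^c π` on
`[0, T]` only depends on `π` on `[0, T]`, it suffices to treat paths continuous on all of `ℝ`.
-/

open Set intervalIntegral
open Real (exp log exp_pos exp_log exp_add log_mul)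

lemma one_add_div_mul_pos (c : ℝ) {p q : ℝ} (hp : 0 ≤ p) (hpq : p ≤ q) (hq : 0 < q) :
    0 < 1 + (exp c - 1) / q * p := by
  have hθ : p / q ≤ 1 := (div_le_one hq).2 hpq
  have hθ₀ : 0 ≤ p / q := div_nonneg hp hq.le
  rw [div_mul_eq_mul_div, mul_div_assoc]
  rcases le_total 1 (exp c) with h | h <;> nlinarith [exp_pos c]

/- With `x = e^c`, `y = e^c'`, `A, B, D, E` the values at `T` of `∫ a`, `∫ b`, `∫ a ∫ b`, `∫ b ∫ a`
and `At, Bt, Dt, Et` their values at `t`, these are the normal forms of the factors that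
`e_α^c e_β^(c+c') e_α^c'` puts in front of `β^∨` and of `α^∨`. -/
lemma braid_identity_middle {x y A B D E Bt Et : ℝ} (hA : 0 < A) (hD : 0 < D) (hE : 0 < E)
    (hy : 0 < y) (hAB : A * B = D + E) :
    1 + (x * y - 1) / (B + (y - 1) / A * E) * (Bt + (y - 1) / A * Et)
      = 1 + ((x * y - 1) * A * Bt + (y - 1) * (x * y - 1) * Et) / (D + y * E) := by
  have hB : B + (y - 1) / A * E = (D + y * E) / A := by
    field_simp
    linear_combination hAB
  have : D + y * E ≠ 0 := by positivity
  rw [hB]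
  field_simp

lemma braid_identity_outer {x y A B D E At Dt : ℝ} (hA : 0 < A) (hD : 0 < D) (hE : 0 < E)
    (hx : 0 < x) (hy : 0 < y) (hAB : A * B = D + E) (ht : 1 + (y - 1) / A * At ≠ 0) :
    (1 + (y - 1) / A * At) * (1 + (x - 1) /
        ((A + (x * y - 1) / (B + (y - 1) / A * E) * D) / (1 + (y - 1) / A * A))
        * ((At + (x * y - 1) / (B + (y - 1) / A * E) * Dt) / (1 + (y - 1) / A * At)))
      = 1 + ((x * y - 1) * B * At + (x - 1) * (x * y - 1) * Dt) / (E + x * D) := by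
  have hB : B + (y - 1) / A * E = (D + y * E) / A := by
    field_simp
    linear_combination hAB
  have hyA : 1 + (y - 1) / A * A = y := by field_simp; ring
  have : D + y * E ≠ 0 := by positivity
  have : E + x * D ≠ 0 := by positivity
  have hAD : A + (x * y - 1) / ((D + y * E) / A) * D = A * y * (E + x * D) / (D + y * E) := by
    field_simp
    ring
  rw [hB, hyA, hAD, mul_add, mul_one, mul_left_comm, mul_div_cancel₀ _ ht]
  field_simp
  linear_combination (1 - x * y) * At * hAB

section Primitives

variable {f g : ℝ → ℝ}

lemma integral_mul_integral_eq_add (hf : Continuous f) (hg : Continuous g) (t : ℝ) :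
    (∫ s in (0:ℝ)..t, f s) * (∫ s in (0:ℝ)..t, g s)
      = (∫ s in (0:ℝ)..t, f s * ∫ u in (0:ℝ)..s, g u)
        + ∫ s in (0:ℝ)..t, g s * ∫ u in (0:ℝ)..s, f u := by
  have := integral_mul_deriv_eq_deriv_mul (a := 0) (b := t)
    (fun s _ => (hf.integral_hasStrictDerivAt 0 s).hasDerivAt)
    (fun s _ => (hg.integral_hasStrictDerivAt 0 s).hasDerivAt)
    (hf.intervalIntegrable _ _) (hg.intervalIntegrable _ _)
  simp only [integral_same, mul_zero, sub_zero, mul_comm _ (g _)] at this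
  linarith [this]

lemma integral_mul_one_add_mul (hg : Continuous g) (hf : Continuous f) (k t : ℝ) :
    ∫ s in (0:ℝ)..t, g s * (1 + k * f s)
      = (∫ s in (0:ℝ)..t, g s) + k * ∫ s in (0:ℝ)..t, g s * f s := by
  simp only [mul_add, mul_one, mul_left_comm _ k]
  rw [integral_add (g := fun s => k * (g s * f s)) (hg.intervalIntegrable _ _)
    ((continuous_const.mul (hg.mul hf)).intervalIntegrable _ _),
    intervalIntegral.integral_const_mul]

lemma integral_mul_div_sq_eq (hf : Continuous f) (hg : Continuous g) (k m t : ℝ)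
    (hne : ∀ s ∈ uIcc 0 t, 1 + k * ∫ u in (0:ℝ)..s, f u ≠ 0) :
    ∫ s in (0:ℝ)..t, f s * (1 + m * ((∫ u in (0:ℝ)..s, g u)
        + k * ∫ u in (0:ℝ)..s, g u * ∫ r in (0:ℝ)..u, f r)) / (1 + k * ∫ u in (0:ℝ)..s, f u) ^ 2
      = ((∫ s in (0:ℝ)..t, f s) + m * ∫ s in (0:ℝ)..t, f s * ∫ u in (0:ℝ)..s, g u)
        / (1 + k * ∫ s in (0:ℝ)..t, f s) := by
  set F := fun s => ∫ u in (0:ℝ)..s, f u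
  set G := fun s => ∫ u in (0:ℝ)..s, g u
  have hF : ∀ s, HasDerivAt F (f s) s := fun s => (hf.integral_hasStrictDerivAt 0 s).hasDerivAt
  have hG : ∀ s, HasDerivAt G (g s) s := fun s => (hg.integral_hasStrictDerivAt 0 s).hasDerivAt
  have hFc : Continuous F := continuous_iff_continuousAt.2 fun s => (hF s).continuousAt
  have hGc : Continuous G := continuous_iff_continuousAt.2 fun s => (hG s).continuousAt
  have hD : ∀ s, HasDerivAt (fun s => ∫ u in (0:ℝ)..s, f u * G u) (f s * G s) s :=
    fun s => ((hf.mul hGc).integral_hasStrictDerivAt 0 s).hasDerivAt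
  have hE : Continuous fun s => ∫ u in (0:ℝ)..s, g u * F u :=
    continuous_primitive (fun _ _ => (hg.mul hFc).intervalIntegrable _ _) 0
  rw [integral_eq_sub_of_hasDerivAt
    (f := fun s => (F s + m * ∫ u in (0:ℝ)..s, f u * G u) / (1 + k * F s))]
  · simp [F, G]
  · intro s hs
    refine (((hF s).add ((hD s).const_mul m)).div (((hF s).const_mul k).const_add 1)
      (hne s hs)).congr_deriv ?_
    have hE_eq : (∫ u in (0:ℝ)..s, g u * F u) = F s * G s - ∫ u in (0:ℝ)..s, f u * G u := by
      linarith [integral_mul_integral_eq_add hf hg s]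
    simp only [F, G, Pi.add_apply] at hE_eq ⊢
    rw [hE_eq]
    field_simp
    ring
  · refine ContinuousOn.intervalIntegrable
      (ContinuousOn.div ?_ ?_ fun s hs => pow_ne_zero 2 (hne s hs))
    · exact (hf.mul (continuous_const.add
        (continuous_const.mul (hGc.add (continuous_const.mul hE))))).continuousOn
    · exact ((continuous_const.add (continuous_const.mul hFc)).pow 2).continuousOn

lemma integral_mul_integral_pos (hf : Continuous f) (hg : Continuous g)
    (hf₀ : ∀ s, 0 < f s) (hg₀ : ∀ s, 0 < g s) {T : ℝ} (hT : 0 < T) :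
    0 < ∫ s in (0:ℝ)..T, f s * ∫ u in (0:ℝ)..s, g u :=
  intervalIntegral_pos_of_pos_on
    ((hf.mul (continuous_primitive (fun _ _ => hg.intervalIntegrable _ _) 0)).intervalIntegrable
      _ _)
    (fun s hs => mul_pos (hf₀ s) (intervalIntegral_pos_of_pos (hg.intervalIntegrable _ _) hg₀ hs.1))
    hT

end Primitives

section PathAct

variable {V : Type*} [NormedAddCommGroup V] [NormedSpace ℝ V]
  (α : V →ₗ[ℝ] ℝ) (αv : V) (T c : ℝ) (π : ℝ → V)

noncomputable def pathFactor (t : ℝ) : ℝ :=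
  1 + (exp c - 1) / exp (pathEps α T π) * ∫ s in (0:ℝ)..t, exp (-α (π s))

lemma pathAct_apply (t : ℝ) : pathAct α αv T c π t = π t + log (pathFactor α T c π t) • αv :=
  rfl

variable {α αv T c π}

lemma pathAct_eqOn {ρ : ℝ → V} (hT : 0 ≤ T) (h : EqOn π ρ (Icc 0 T)) :
    EqOn (pathAct α αv T c π) (pathAct α αv T c ρ) (Icc 0 T) := by
  have hint : ∀ t ∈ Icc 0 T, ∫ s in (0:ℝ)..t, exp (-α (π s)) = ∫ s in (0:ℝ)..t, exp (-α (ρ s)) :=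
    fun t ht => integral_congr fun s hs => by
      rw [uIcc_of_le ht.1] at hs
      simp only [h ⟨hs.1, hs.2.trans ht.2⟩]
  intro t ht
  simp only [pathAct, pathEps, h ht, hint t ht, hint T ⟨hT, le_rfl⟩]

lemma map_pathAct_of_eq_zero {γ : V →ₗ[ℝ] ℝ} (hγ : γ αv = 0) (t : ℝ) :
    γ (pathAct α αv T c π t) = γ (π t) := by
  simp [pathAct, hγ]

lemma pathFactor_pathAct_of_eq_zero {γ : V →ₗ[ℝ] ℝ} (hγ : γ αv = 0) (c' : ℝ) :
    pathFactor γ T c' (pathAct α αv T c π) = pathFactor γ T c' π := by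
  funext t
  simp only [pathFactor, pathEps, map_pathAct_of_eq_zero hγ]

lemma pathAct_comm {β : V →ₗ[ℝ] ℝ} {βv : V} {c' : ℝ} (hαβ : α βv = 0) (hβα : β αv = 0) :
    pathAct α αv T c (pathAct β βv T c' π) = pathAct β βv T c' (pathAct α αv T c π) := by
  funext t
  rw [pathAct_apply, pathFactor_pathAct_of_eq_zero hαβ, pathAct_apply, pathAct_apply,
    pathFactor_pathAct_of_eq_zero hβα, pathAct_apply]
  abel

end PathAct

section Continuity

variable {V : Type*} [NormedAddCommGroup V] [NormedSpace ℝ V] [FiniteDimensional ℝ V]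
  {α : V →ₗ[ℝ] ℝ} {αv : V} {T c : ℝ} {π : ℝ → V}

lemma continuousOn_exp_neg_comp (hπ : ContinuousOn π (Icc 0 T)) :
    ContinuousOn (fun s => exp (-α (π s))) (Icc 0 T) :=
  (α.continuous_of_finiteDimensional.comp_continuousOn hπ).neg.rexp

lemma integral_exp_neg_comp_pos (hT : 0 < T) (hπ : ContinuousOn π (Icc 0 T)) :
    0 < ∫ s in (0:ℝ)..T, exp (-α (π s)) :=
  intervalIntegral_pos_of_pos_on ((continuousOn_exp_neg_comp hπ).intervalIntegrable_of_Icc hT.le)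
    (fun _ _ => exp_pos _) hT

lemma exp_pathEps (hT : 0 < T) (hπ : ContinuousOn π (Icc 0 T)) :
    exp (pathEps α T π) = ∫ s in (0:ℝ)..T, exp (-α (π s)) :=
  exp_log (integral_exp_neg_comp_pos hT hπ)

lemma pathFactor_pos (hT : 0 < T) (hπ : ContinuousOn π (Icc 0 T)) {t : ℝ} (ht : t ∈ Icc 0 T) :
    0 < pathFactor α T c π t := by
  have hint := (continuousOn_exp_neg_comp (α := α) hπ).intervalIntegrable_of_Icc (μ := volume) hT.le
  rw [pathFactor, exp_pathEps hT hπ]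
  exact one_add_div_mul_pos c (integral_nonneg ht.1 fun _ _ => (exp_pos _).le)
    (integral_mono_interval le_rfl ht.1 ht.2 (Filter.Eventually.of_forall fun _ => (exp_pos _).le)
      hint) (integral_exp_neg_comp_pos hT hπ)

lemma continuousOn_pathFactor (hT : 0 ≤ T) (hπ : ContinuousOn π (Icc 0 T)) :
    ContinuousOn (pathFactor α T c π) (Icc 0 T) := by
  have hprim := continuousOn_primitive_interval (a := 0) (b := T) (μ := volume)
    (f := fun s => exp (-α (π s)))
    (by rw [uIcc_of_le hT]; exact (continuousOn_exp_neg_comp hπ).integrableOn_Icc)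
  rw [uIcc_of_le hT] at hprim
  exact continuousOn_const.add (continuousOn_const.mul hprim)

lemma ContinuousOn.pathAct (hT : 0 < T) (hπ : ContinuousOn π (Icc 0 T)) :
    ContinuousOn (pathAct α αv T c π) (Icc 0 T) :=
  hπ.add (((continuousOn_pathFactor hT.le hπ).log fun _ ht => (pathFactor_pos hT hπ ht).ne').smul
    continuousOn_const)

lemma pathFactor_eq_of_integral_eq {P : ℝ → ℝ} (hT : 0 < T) (hπ : ContinuousOn π (Icc 0 T))
    (hP : ∀ r ∈ Icc 0 T, ∫ s in (0:ℝ)..r, exp (-α (π s)) = P r) {t : ℝ} (ht : t ∈ Icc 0 T) :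
    pathFactor α T c π t = 1 + (exp c - 1) / P T * P t := by
  rw [pathFactor, exp_pathEps hT hπ, hP T ⟨hT.le, le_rfl⟩, hP t ht]

lemma exp_neg_map_pathAct_of_eq_neg_one {γ : V →ₗ[ℝ] ℝ} (hγ : γ αv = -1) (hT : 0 < T)
    (hπ : ContinuousOn π (Icc 0 T)) {s : ℝ} (hs : s ∈ Icc 0 T) :
    exp (-γ (pathAct α αv T c π s)) = exp (-γ (π s)) * pathFactor α T c π s := by
  rw [pathAct_apply, map_add, map_smul, smul_eq_mul, hγ, mul_neg_one, neg_add, neg_neg, exp_add,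
    exp_log (pathFactor_pos hT hπ hs)]

lemma exp_neg_map_pathAct_of_eq_two (hα : α αv = 2) (hT : 0 < T)
    (hπ : ContinuousOn π (Icc 0 T)) {s : ℝ} (hs : s ∈ Icc 0 T) :
    exp (-α (pathAct α αv T c π s)) = exp (-α (π s)) / pathFactor α T c π s ^ 2 := by
  rw [pathAct_apply, map_add, map_smul, smul_eq_mul, hα, neg_add, exp_add, Real.exp_neg (_ * 2),
    mul_two, exp_add, exp_log (pathFactor_pos hT hπ hs), ← sq, div_eq_mul_inv]

end Continuity

noncomputable def vermaFactor (a b : ℝ → ℝ) (T c c' t : ℝ) : ℝ :=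
  1 + ((exp (c + c') - 1) * (∫ s in (0:ℝ)..T, b s) * (∫ s in (0:ℝ)..t, a s)
      + (exp c - 1) * (exp (c + c') - 1) * ∫ s in (0:ℝ)..t, a s * ∫ u in (0:ℝ)..s, b u)
    / ((∫ s in (0:ℝ)..T, b s * ∫ u in (0:ℝ)..s, a u)
      + exp c * ∫ s in (0:ℝ)..T, a s * ∫ u in (0:ℝ)..s, b u)

theorem pathAct_pathAct_pathAct_eq {V : Type*} [NormedAddCommGroup V] [NormedSpace ℝ V]
    [FiniteDimensional ℝ V] {T : ℝ} (hT : 0 < T) {α β : V →ₗ[ℝ] ℝ} {αv βv : V}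
    (hα : α αv = 2) (hαβ : α βv = -1) (hβα : β αv = -1) {π : ℝ → V} (hπ : Continuous π)
    (c c' : ℝ) {t : ℝ} (ht : t ∈ Icc 0 T) :
    pathAct α αv T c (pathAct β βv T (c + c') (pathAct α αv T c' π)) t
      = π t + log (vermaFactor (fun s => exp (-α (π s))) (fun s => exp (-β (π s))) T c c' t) • αv
        + log (vermaFactor (fun s => exp (-β (π s))) (fun s => exp (-α (π s))) T c' c t) • βv := by
  set a := fun s => exp (-α (π s))
  set b := fun s => exp (-β (π s))
  have ha : Continuous a := (α.continuous_of_finiteDimensional.comp hπ).neg.rexp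
  have hb : Continuous b := (β.continuous_of_finiteDimensional.comp hπ).neg.rexp
  set A := fun r => ∫ s in (0:ℝ)..r, a s
  set B := fun r => ∫ s in (0:ℝ)..r, b s
  set D := fun r => ∫ s in (0:ℝ)..r, a s * B s
  set E := fun r => ∫ s in (0:ℝ)..r, b s * A s
  have hA : Continuous A := continuous_primitive (fun _ _ => ha.intervalIntegrable _ _) 0
  have hAT : 0 < A T :=
    intervalIntegral_pos_of_pos (ha.intervalIntegrable _ _) (fun _ => exp_pos _) hT
  have hDT : 0 < D T := integral_mul_integral_pos ha hb (fun _ => exp_pos _) (fun _ => exp_pos _) hT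
  have hET : 0 < E T := integral_mul_integral_pos hb ha (fun _ => exp_pos _) (fun _ => exp_pos _) hT
  have hABT : A T * B T = D T + E T := integral_mul_integral_eq_add ha hb T
  set π₁ := pathAct α αv T c' π
  set π₂ := pathAct β βv T (c + c') π₁
  have hπ₁ : ContinuousOn π₁ (Icc 0 T) := hπ.continuousOn.pathAct hT
  have hπ₂ : ContinuousOn π₂ (Icc 0 T) := hπ₁.pathAct hT
  have hsub : ∀ r ∈ Icc 0 T, uIcc 0 r ⊆ Icc 0 T := fun r hr => uIcc_subset_Icc ⟨le_rfl, hT.le⟩ hr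
  have hψ₁ : ∀ r ∈ Icc 0 T, pathFactor α T c' π r = 1 + (exp c' - 1) / A T * A r :=
    fun r hr => pathFactor_eq_of_integral_eq hT hπ.continuousOn (fun _ _ => rfl) hr
  have hψ₁_pos : ∀ r ∈ Icc 0 T, 0 < 1 + (exp c' - 1) / A T * A r :=
    fun r hr => hψ₁ r hr ▸ pathFactor_pos hT hπ.continuousOn hr
  have hψ₂ : ∀ r ∈ Icc 0 T, pathFactor β T (c + c') π₁ r = 1 + (exp (c + c') - 1)
      / (B T + (exp c' - 1) / A T * E T) * (B r + (exp c' - 1) / A T * E r) := by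
    refine fun r hr => pathFactor_eq_of_integral_eq (P := fun r => B r + (exp c' - 1) / A T * E r)
      hT hπ₁ (fun r hr => ?_) hr
    rw [← integral_mul_one_add_mul hb hA]
    refine integral_congr fun s hs => ?_
    rw [exp_neg_map_pathAct_of_eq_neg_one hβα hT hπ.continuousOn (hsub r hr hs),
      hψ₁ s (hsub r hr hs)]
  have hfst : pathFactor α T c' π t * pathFactor α T c π₂ t = vermaFactor a b T c c' t := by
    rw [hψ₁ t ht, pathFactor_eq_of_integral_eq (P := fun r => (A r + (exp (c + c') - 1)
      / (B T + (exp c' - 1) / A T * E T) * D r) / (1 + (exp c' - 1) / A T * A r)) hT hπ₂ _ ht,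
      vermaFactor, exp_add]
    · exact braid_identity_outer hAT hDT hET (exp_pos c) (exp_pos c') hABT (hψ₁_pos t ht).ne'
    intro r hr
    rw [← integral_mul_div_sq_eq ha hb _ _ r fun s hs => (hψ₁_pos s (hsub r hr hs)).ne']
    refine integral_congr fun s hs => ?_
    rw [exp_neg_map_pathAct_of_eq_neg_one hαβ hT hπ₁ (hsub r hr hs),
      exp_neg_map_pathAct_of_eq_two hα hT hπ.continuousOn (hsub r hr hs), hψ₁ s (hsub r hr hs),
      hψ₂ s (hsub r hr hs)]
    ring
  have hsnd : pathFactor β T (c + c') π₁ t = vermaFactor b a T c' c t := by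
    rw [hψ₂ t ht, vermaFactor, add_comm c' c, exp_add]
    exact braid_identity_middle hAT hDT hET (exp_pos c') hABT
  rw [← hfst, ← hsnd, log_mul (pathFactor_pos hT hπ.continuousOn ht).ne'
    (pathFactor_pos hT hπ₂ ht).ne']
  simp only [π₂, π₁, pathAct_apply]
  module

lemma ContinuousOn.exists_continuous_eqOn_Icc {X : Type*} [TopologicalSpace X] {f : ℝ → X}
    {a b : ℝ} (hab : a ≤ b) (hf : ContinuousOn f (Icc a b)) :
    ∃ g : ℝ → X, Continuous g ∧ EqOn f g (Icc a b) :=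
  ⟨IccExtend hab ((Icc a b).domRestrict f), hf.domRestrict.Icc_extend',
    fun _ hx => (IccExtend_of_mem hab ((Icc a b).domRestrict f) hx).symm⟩

theorem verma_relations_rank_two_general
    {V : Type*} [NormedAddCommGroup V] [NormedSpace ℝ V] [FiniteDimensional ℝ V]
    (T : ℝ) (hT : 0 < T)
    (α β : V →ₗ[ℝ] ℝ) (αv βv : V) (hα : α αv = 2) (hβ : β βv = 2)
    (π : ℝ → V) (hπ : ContinuousOn π (Set.Icc 0 T))
    (c₁ c₂ : ℝ) :
    ((α βv = 0 ∧ β αv = 0) → ∀ t ∈ Set.Icc (0:ℝ) T,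
      pathAct α αv T c₁ (pathAct β βv T c₂ π) t =
        pathAct β βv T c₂ (pathAct α αv T c₁ π) t) ∧
    ((α βv = -1 ∧ β αv = -1) → ∀ t ∈ Set.Icc (0:ℝ) T,
      pathAct α αv T c₁ (pathAct β βv T (c₁ + c₂) (pathAct α αv T c₂ π)) t =
        pathAct β βv T c₂ (pathAct α αv T (c₁ + c₂) (pathAct β βv T c₁ π)) t) := by
  refine ⟨fun ⟨hαβ, hβα⟩ t _ => by rw [pathAct_comm hαβ hβα], fun ⟨hαβ, hβα⟩ t ht => ?_⟩
  obtain ⟨ρ, hρ, hπρ⟩ := hπ.exists_continuous_eqOn_Icc hT.le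
  have hl := pathAct_eqOn (α := α) (αv := αv) (c := c₁) hT.le <|
    pathAct_eqOn (α := β) (αv := βv) (c := c₁ + c₂) hT.le <|
    pathAct_eqOn (α := α) (αv := αv) (c := c₂) hT.le hπρ
  have hr := pathAct_eqOn (α := β) (αv := βv) (c := c₂) hT.le <|
    pathAct_eqOn (α := α) (αv := αv) (c := c₁ + c₂) hT.le <|
    pathAct_eqOn (α := β) (αv := βv) (c := c₁) hT.le hπρ
  rw [hl ht, hr ht, pathAct_pathAct_pathAct_eq hT hα hαβ hβα hρ _ _ ht, add_comm c₁ c₂,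
    pathAct_pathAct_pathAct_eq hT hβ hβα hαβ hρ _ _ ht]
  exact add_right_comm _ _ _

/-- Verma relations in the geometric Littelmann path model, in ranks `A₁ × A₁` and `A₂`. -/
theorem verma_relations_rank_two
    {V : Type*} [NormedAddCommGroup V] [NormedSpace ℝ V] [FiniteDimensional ℝ V]
    (T : ℝ) (hT : 0 < T)
    (α β : V →ₗ[ℝ] ℝ) (αv βv : V) (hα : α αv = 2) (hβ : β βv = 2)
    (π : ℝ → V) (hπ : ContinuousOn π (Set.Icc 0 T)) (hπ0 : π 0 = 0)
    (c₁ c₂ : ℝ) :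
    ((α βv = 0 ∧ β αv = 0) → ∀ t ∈ Set.Icc (0:ℝ) T,
      pathAct α αv T c₁ (pathAct β βv T c₂ π) t =
        pathAct β βv T c₂ (pathAct α αv T c₁ π) t) ∧
    ((α βv = -1 ∧ β αv = -1) → ∀ t ∈ Set.Icc (0:ℝ) T,
      pathAct α αv T c₁ (pathAct β βv T (c₁ + c₂) (pathAct α αv T c₂ π)) t =
        pathAct β βv T c₂ (pathAct α αv T (c₁ + c₂) (pathAct β βv T c₁ π)) t) :=
  verma_relations_rank_two_general T hT α β αv βv hα hβ π hπ c₁ c₂
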